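/- With G = N ⋊ T and notation as in Tahara's decomposition, for all n ≥ 1 one has I(G)^n · I(T) = I(T)^{n+1} ⊕ 𝒦_{n+1} as abelian groups, where 𝒦_{n+1} = Σ_{i=1}^{n} Λ_{n+1-i}·I(T)^i. -/

import Mathlib

/-! Write `Λ_j` for `nIdeal G Ns j`. Conjugating a generator `b - 1` of `Λ_j` by `g` changes it
only modulo `Λ_{j+1}`, because `g b g⁻¹ b⁻¹ ∈ N_{(k+1)}` for `b ∈ N_{(k)}`; hence
`(g - 1)·x = (g x g⁻¹)·(g - 1) + (g x g⁻¹ - x)` gives `I(G)·Λ_j ⊆ Λ_j·I(G) + Λ_{j+1}`. Since every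
`g = a t` with `a ∈ N`, `t ∈ T` has `g - 1 = (a - 1) + (t - 1) + (a - 1)(t - 1)`, this improves to
`I(G)·Λ_j ⊆ Λ_j·I(T) + Λ_{j+1}`, and induction on `n` gives `I(G)^n·I(T) ⊆ I(T)^{n+1} + 𝒦_{n+1}`.
Conversely `Λ_j ⊆ I(G)^j`, as `N_{(k)}` lies in the `k`-th dimension subgroup. The sum is direct:
`I(T)^{n+1}` lies in the image of `ℤ[T]`, `𝒦_{n+1}` in the kernel of `ℤ[G] → ℤ[G/N]`, and the
composite `ℤ[T] → ℤ[G/N]` is injective because `N ∩ T = 1`. -/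

open MonoidAlgebra

/-- The ℤ-submodule of `ℤ[G]` generated by the elements `h - 1`, `h ∈ H`. -/
noncomputable def relAug (G : Type*) [Group G] (H : Subgroup G) :
    Submodule ℤ (MonoidAlgebra ℤ G) :=
  Submodule.span ℤ {x | ∃ h ∈ H, x = MonoidAlgebra.of ℤ G h - 1}

/-- The augmentation ideal `I(G)` of `ℤ[G]`, as a ℤ-submodule. -/
noncomputable def augI (G : Type*) [Group G] : Submodule ℤ (MonoidAlgebra ℤ G) :=
  Submodule.span ℤ {x | ∃ g : G, x = MonoidAlgebra.of ℤ G g - 1}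

/-- The filtration ideal `I_𝒢^n(G) ⊆ ℤ[G]` associated to an N-series `Gs`. -/
noncomputable def nIdeal (G : Type*) [Group G] (Gs : ℕ → Subgroup G) (n : ℕ) :
    Submodule ℤ (MonoidAlgebra ℤ G) :=
  Submodule.span ℤ
    {x | ∃ l : List (ℕ × G), l ≠ [] ∧ (∀ p ∈ l, 1 ≤ p.1 ∧ p.2 ∈ Gs p.1) ∧
      n ≤ (l.map Prod.fst).sum ∧
      x = (l.map fun p => MonoidAlgebra.of ℤ G p.2 - 1).prod}

/-- `𝒦_n = Σ_{i=1}^{n-1} Δ_{n-i}·I(T)^i`, for a filtration `Δ` of `I(N)`. -/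
noncomputable def Kfil (G : Type*) [Group G] (Δ : ℕ → Submodule ℤ (MonoidAlgebra ℤ G))
    (T : Subgroup G) (n : ℕ) : Submodule ℤ (MonoidAlgebra ℤ G) :=
  ⨆ i ∈ Finset.Ico 1 n, Δ (n - i) * (relAug G T) ^ i

theorem pow_succ_le_pow_of_mul_le_self {M : Type*} [Monoid M] [Preorder M] [MulLeftMono M]
    {a : M} (h : a * a ≤ a) {j : ℕ} (hj : 1 ≤ j) : a ^ (j + 1) ≤ a ^ j := by
  obtain ⟨k, rfl⟩ := Nat.exists_eq_add_of_le' hj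
  rw [pow_succ, pow_succ, mul_assoc]
  exact mul_le_mul_right h _

section

variable {G : Type*} [Group G]

section Augmentation

theorem sub_one_mem_relAug {H : Subgroup G} {h : G} (hh : h ∈ H) :
    of ℤ G h - 1 ∈ relAug G H :=
  Submodule.subset_span ⟨h, hh, rfl⟩

theorem augI_eq_relAug_top : augI G = relAug G ⊤ := by
  simp [augI, relAug]

theorem relAug_mono {H K : Subgroup G} (hHK : H ≤ K) : relAug G H ≤ relAug G K :=
  Submodule.span_mono fun _ ⟨h, hh, e⟩ => ⟨h, hHK hh, e⟩

theorem mul_of_mem_relAug {H : Subgroup G} {h : G} (hh : h ∈ H) {x : MonoidAlgebra ℤ G}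
    (hx : x ∈ relAug G H) : x * of ℤ G h ∈ relAug G H := by
  induction hx using Submodule.span_induction with
  | mem x hx =>
    obtain ⟨k, hk, rfl⟩ := hx
    have e : (of ℤ G k - 1) * of ℤ G h = (of ℤ G (k * h) - 1) - (of ℤ G h - 1) := by
      rw [map_mul]; noncomm_ring
    rw [e]
    exact sub_mem (sub_one_mem_relAug (mul_mem hk hh)) (sub_one_mem_relAug hh)
  | zero => simp
  | add x y _ _ hx hy => rw [add_mul]; exact add_mem hx hy
  | smul a x _ hx => rw [smul_mul_assoc]; exact Submodule.smul_mem _ _ hx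

theorem relAug_mul_relAug_le (H : Subgroup G) : relAug G H * relAug G H ≤ relAug G H := by
  refine Submodule.mul_le.2 fun x hx y hy => ?_
  induction hy using Submodule.span_induction with
  | mem y hy =>
    obtain ⟨h, hh, rfl⟩ := hy
    rw [mul_sub, mul_one]
    exact sub_mem (mul_of_mem_relAug hh hx) hx
  | zero => simp
  | add y z _ _ hy hz => rw [mul_add]; exact add_mem hy hz
  | smul a y _ hy => rw [mul_smul_comm]; exact Submodule.smul_mem _ _ hy

theorem mul_of_mem_relAug_pow {H : Subgroup G} {h : G} (hh : h ∈ H) {m : ℕ}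
    {x : MonoidAlgebra ℤ G} (hx : x ∈ relAug G H ^ (m + 1)) :
    x * of ℤ G h ∈ relAug G H ^ (m + 1) := by
  rw [pow_succ] at hx ⊢
  refine Submodule.mul_induction_on hx (fun a ha b hb => ?_) (fun x y hx hy => ?_)
  · rw [mul_assoc]
    exact Submodule.mul_mem_mul ha (mul_of_mem_relAug hh hb)
  · rw [add_mul]
    exact add_mem hx hy

end Augmentation

section DimensionSubgroup

open scoped commutatorElement

theorem sub_one_mem_augI (g : G) : of ℤ G g - 1 ∈ augI G :=
  Submodule.subset_span ⟨g, rfl⟩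

theorem mul_of_mem_augI_pow (g : G) {m : ℕ} {x : MonoidAlgebra ℤ G}
    (hx : x ∈ augI G ^ (m + 1)) : x * of ℤ G g ∈ augI G ^ (m + 1) := by
  rw [augI_eq_relAug_top] at hx ⊢
  exact mul_of_mem_relAug_pow (Subgroup.mem_top g) hx

variable (G) in
/-- The dimension subgroup `D_{m+1}(G)`, indexed from `0` because `I(G)^0` is not an ideal. -/
noncomputable def dimensionSubgroup (m : ℕ) : Subgroup G where
  carrier := {g | of ℤ G g - 1 ∈ augI G ^ (m + 1)}
  one_mem' := by
    show of ℤ G 1 - 1 ∈ augI G ^ (m + 1)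
    rw [map_one, sub_self]
    exact zero_mem _
  mul_mem' {a b} ha hb := by
    have e : of ℤ G (a * b) - 1 = (of ℤ G a - 1) * of ℤ G b + (of ℤ G b - 1) := by
      rw [map_mul]; noncomm_ring
    show of ℤ G (a * b) - 1 ∈ augI G ^ (m + 1)
    rw [e]
    exact add_mem (mul_of_mem_augI_pow b ha) hb
  inv_mem' {a} ha := by
    have e : of ℤ G a⁻¹ - 1 = -((of ℤ G a - 1) * of ℤ G a⁻¹) := by
      rw [sub_mul, ← map_mul, mul_inv_cancel, map_one]; noncomm_ring
    show of ℤ G a⁻¹ - 1 ∈ augI G ^ (m + 1)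
    rw [e]
    exact neg_mem (mul_of_mem_augI_pow a⁻¹ ha)

theorem of_commutatorElement_sub_one (g h : G) :
    of ℤ G ⁅g, h⁆ - 1 = ((of ℤ G g - 1) * (of ℤ G h - 1) - (of ℤ G h - 1) * (of ℤ G g - 1)) *
      of ℤ G (g⁻¹ * h⁻¹) := by
  have hgh : of ℤ G ⁅g, h⁆ = of ℤ G g * of ℤ G h * of ℤ G (g⁻¹ * h⁻¹) := by
    rw [← map_mul, ← map_mul, commutatorElement_def]; congr 1; group
  have hhg : of ℤ G h * of ℤ G g * of ℤ G (g⁻¹ * h⁻¹) = 1 := by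
    rw [← map_mul, ← map_mul, show h * g * (g⁻¹ * h⁻¹) = 1 by group, map_one]
  rw [show (of ℤ G g - 1) * (of ℤ G h - 1) - (of ℤ G h - 1) * (of ℤ G g - 1) =
    of ℤ G g * of ℤ G h - of ℤ G h * of ℤ G g by noncomm_ring, sub_mul, hhg, hgh]

theorem le_dimensionSubgroup {Ns : ℕ → Subgroup G}
    (hNsrec : ∀ i, 1 ≤ i → Ns (i + 1) = ⁅Ns i, (⊤ : Subgroup G)⁆) :
    ∀ m, Ns (m + 1) ≤ dimensionSubgroup G m
  | 0 => fun b _ => by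
    show of ℤ G b - 1 ∈ augI G ^ (0 + 1)
    rw [zero_add, pow_one]
    exact sub_one_mem_augI b
  | m + 1 => by
    rw [hNsrec (m + 1) (by omega), Subgroup.commutator_le]
    intro g hg h _
    have hg' : of ℤ G g - 1 ∈ augI G ^ (m + 1) := le_dimensionSubgroup hNsrec m hg
    have hgh : (of ℤ G g - 1) * (of ℤ G h - 1) ∈ augI G ^ (m + 1 + 1) :=
      pow_succ (augI G) (m + 1) ▸ Submodule.mul_mem_mul hg' (sub_one_mem_augI h)
    have hhg : (of ℤ G h - 1) * (of ℤ G g - 1) ∈ augI G ^ (m + 1 + 1) :=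
      pow_succ' (augI G) (m + 1) ▸ Submodule.mul_mem_mul (sub_one_mem_augI h) hg'
    show of ℤ G ⁅g, h⁆ - 1 ∈ augI G ^ (m + 1 + 1)
    rw [of_commutatorElement_sub_one]
    exact mul_of_mem_augI_pow _ (sub_mem hgh hhg)

end DimensionSubgroup

section Filtration

variable {Ns : ℕ → Subgroup G}

theorem sub_one_mem_nIdeal {k : ℕ} (hk : 1 ≤ k) {b : G} (hb : b ∈ Ns k) :
    of ℤ G b - 1 ∈ nIdeal G Ns k :=
  Submodule.subset_span ⟨[(k, b)], by simp, by simpa using ⟨hk, hb⟩, by simp, by simp⟩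

theorem nIdeal_antitone : Antitone (nIdeal G Ns) := fun _ _ hjk =>
  Submodule.span_mono fun _ ⟨l, hl, hmem, hsum, e⟩ => ⟨l, hl, hmem, hjk.trans hsum, e⟩

theorem nIdeal_mul_nIdeal_le (j k : ℕ) :
    nIdeal G Ns j * nIdeal G Ns k ≤ nIdeal G Ns (j + k) := by
  rw [nIdeal, nIdeal, Submodule.span_mul_span]
  refine Submodule.span_mono ?_
  rintro _ ⟨_, ⟨l₁, hl₁, hmem₁, hsum₁, rfl⟩, _, ⟨l₂, -, hmem₂, hsum₂, rfl⟩, rfl⟩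
  refine ⟨l₁ ++ l₂, by simp [hl₁], ?_, ?_, by simp⟩
  · intro p hp
    exact (List.mem_append.1 hp).elim (hmem₁ p) (hmem₂ p)
  · simpa using add_le_add hsum₁ hsum₂

theorem nIdeal_le_of_filtration {S : ℕ → Submodule ℤ (MonoidAlgebra ℤ G)}
    (hgen : ∀ k, 1 ≤ k → ∀ b ∈ Ns k, of ℤ G b - 1 ∈ S k)
    (hmul : ∀ j k, S j * S k ≤ S (j + k)) (hsucc : ∀ j, 1 ≤ j → S (j + 1) ≤ S j)
    {j : ℕ} (hj : 1 ≤ j) : nIdeal G Ns j ≤ S j := by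
  have hprod : ∀ l : List (ℕ × G), l ≠ [] → (∀ p ∈ l, 1 ≤ p.1 ∧ p.2 ∈ Ns p.1) →
      (l.map fun p => of ℤ G p.2 - 1).prod ∈ S (l.map Prod.fst).sum := by
    intro l
    induction l with
    | nil => exact fun h => absurd rfl h
    | cons p l ih =>
      intro _ hmem
      have hp := hgen p.1 (hmem p (by simp)).1 p.2 (hmem p (by simp)).2
      rcases eq_or_ne l [] with rfl | hl
      · simpa using hp
      · simpa using hmul _ _ (Submodule.mul_mem_mul hp
          (ih hl fun q hq => hmem q (List.mem_cons_of_mem p hq)))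
  refine Submodule.span_le.2 ?_
  rintro _ ⟨l, hl, hmem, hsum, rfl⟩
  exact antitoneOn_nat_Ici_of_succ_le (fun k hk => hsucc k hk) hj (hj.trans hsum) hsum
    (hprod l hl hmem)

theorem nIdeal_le_augI_pow (hNsrec : ∀ i, 1 ≤ i → Ns (i + 1) = ⁅Ns i, (⊤ : Subgroup G)⁆)
    {j : ℕ} (hj : 1 ≤ j) : nIdeal G Ns j ≤ augI G ^ j := by
  refine nIdeal_le_of_filtration (fun k hk b hb => ?_)
    (fun i k => (pow_add (augI G) i k).ge)
    (fun i hi => pow_succ_le_pow_of_mul_le_self ?_ hi) hj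
  · obtain ⟨m, rfl⟩ := Nat.exists_eq_add_of_le' hk
    exact le_dimensionSubgroup hNsrec m hb
  · rw [augI_eq_relAug_top]
    exact relAug_mul_relAug_le ⊤

end Filtration

section Conjugation

open scoped commutatorElement

variable {Ns : ℕ → Subgroup G}

local notation "conj" t => domCongr ℤ ℤ (MulAut.conj t)

theorem conj_of (t g : G) : (conj t) (of ℤ G g) = of ℤ G (t * g * t⁻¹) := by
  simp [of_apply, domCongr_single]

theorem conj_mul_of (t : G) (x : MonoidAlgebra ℤ G) : (conj t) x * of ℤ G t = of ℤ G t * x := by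
  induction x using MonoidAlgebra.induction_on with
  | of g => rw [conj_of, ← map_mul, ← map_mul, inv_mul_cancel_right]
  | add x y hx hy => rw [map_add, add_mul, mul_add, hx, hy]
  | smul r x hx => rw [map_zsmul, smul_mul_assoc, mul_smul_comm, hx]

theorem conj_sub_self_mem_nIdeal (hNsrec : ∀ i, 1 ≤ i → Ns (i + 1) = ⁅Ns i, (⊤ : Subgroup G)⁆)
    (t : G) {j : ℕ} (hj : 1 ≤ j) {x : MonoidAlgebra ℤ G} (hx : x ∈ nIdeal G Ns j) :
    (conj t) x - x ∈ nIdeal G Ns (j + 1) := by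
  let S : ℕ → Submodule ℤ (MonoidAlgebra ℤ G) := fun i =>
    nIdeal G Ns i ⊓ (nIdeal G Ns (i + 1)).comap ((conj t).toLinearMap - LinearMap.id)
  suffices nIdeal G Ns j ≤ S j from (this hx).2
  refine nIdeal_le_of_filtration (S := S)
    (fun k hk b hb => ⟨sub_one_mem_nIdeal hk hb, ?_⟩) (fun i k => ?_)
    (fun i _ => inf_le_inf (nIdeal_antitone i.le_succ)
      (Submodule.comap_mono (nIdeal_antitone (i + 1).le_succ))) hj
  · have hc : ⁅t, b⁆ ∈ Ns (k + 1) := by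
      rw [hNsrec k hk, Subgroup.commutator_comm]
      exact Subgroup.commutator_mem_commutator (Subgroup.mem_top t) hb
    have e : (conj t) (of ℤ G b - 1) - (of ℤ G b - 1) =
        (of ℤ G ⁅t, b⁆ - 1) * (of ℤ G b - 1) + (of ℤ G ⁅t, b⁆ - 1) := by
      rw [map_sub, map_one, conj_of, show t * b * t⁻¹ = ⁅t, b⁆ * b by group, map_mul]
      noncomm_ring
    show (conj t) (of ℤ G b - 1) - (of ℤ G b - 1) ∈ nIdeal G Ns (k + 1)
    rw [e]
    refine add_mem (nIdeal_antitone (by omega) (nIdeal_mul_nIdeal_le (k + 1) k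
      (Submodule.mul_mem_mul (sub_one_mem_nIdeal (by omega) hc) (sub_one_mem_nIdeal hk hb))))
      (sub_one_mem_nIdeal (by omega) hc)
  · refine Submodule.mul_le.2 fun x hx y hy => ⟨nIdeal_mul_nIdeal_le i k
      (Submodule.mul_mem_mul hx.1 hy.1), ?_⟩
    have hx' : (conj t) x - x ∈ nIdeal G Ns (i + 1) := hx.2
    have hy' : (conj t) y - y ∈ nIdeal G Ns (k + 1) := hy.2
    have hcy : (conj t) y ∈ nIdeal G Ns k :=
      sub_add_cancel ((conj t) y) y ▸ add_mem (nIdeal_antitone k.le_succ hy') hy.1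
    have e : (conj t) (x * y) - x * y = ((conj t) x - x) * (conj t) y + x * ((conj t) y - y) := by
      rw [map_mul]; noncomm_ring
    show (conj t) (x * y) - x * y ∈ nIdeal G Ns (i + k + 1)
    rw [e]
    refine add_mem (nIdeal_antitone (by omega) (nIdeal_mul_nIdeal_le (i + 1) k
      (Submodule.mul_mem_mul hx' hcy))) (nIdeal_mul_nIdeal_le i (k + 1)
      (Submodule.mul_mem_mul hx.1 hy'))

theorem relAug_mul_nIdeal_le (hNsrec : ∀ i, 1 ≤ i → Ns (i + 1) = ⁅Ns i, (⊤ : Subgroup G)⁆)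
    (H : Subgroup G) {j : ℕ} (hj : 1 ≤ j) :
    relAug G H * nIdeal G Ns j ≤ nIdeal G Ns j * relAug G H ⊔ nIdeal G Ns (j + 1) := by
  refine Submodule.mul_le.2 fun a ha x hx => ?_
  induction ha using Submodule.span_induction with
  | mem a ha =>
    obtain ⟨h, hh, rfl⟩ := ha
    have hcx : (conj h) x ∈ nIdeal G Ns j :=
      sub_add_cancel ((conj h) x) x ▸
        add_mem (nIdeal_antitone j.le_succ (conj_sub_self_mem_nIdeal hNsrec h hj hx)) hx
    have e : (of ℤ G h - 1) * x = (conj h) x * (of ℤ G h - 1) + ((conj h) x - x) := by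
      rw [mul_sub, conj_mul_of]; noncomm_ring
    rw [e]
    exact add_mem (Submodule.mem_sup_left (Submodule.mul_mem_mul hcx (sub_one_mem_relAug hh)))
      (Submodule.mem_sup_right (conj_sub_self_mem_nIdeal hNsrec h hj hx))
  | zero => simp
  | add a b _ _ ha hb => rw [add_mul]; exact add_mem ha hb
  | smul r a _ ha => rw [smul_mul_assoc]; exact Submodule.smul_mem _ _ ha

end Conjugation

section Kfil

variable {T : Subgroup G} {Δ : ℕ → Submodule ℤ (MonoidAlgebra ℤ G)}

theorem le_Kfil {j i n : ℕ} (hj : 1 ≤ j) (hi : 1 ≤ i) (hn : j + i = n) :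
    Δ j * relAug G T ^ i ≤ Kfil G Δ T n := by
  subst hn
  have hmem : i ∈ Finset.Ico 1 (j + i) := Finset.mem_Ico.2 ⟨hi, by omega⟩
  have h := le_iSup₂ (f := fun k (_ : k ∈ Finset.Ico 1 (j + i)) =>
    Δ (j + i - k) * relAug G T ^ k) i hmem
  rwa [Nat.add_sub_cancel] at h

theorem Kfil_le {n : ℕ} {P : Submodule ℤ (MonoidAlgebra ℤ G)}
    (h : ∀ j i, 1 ≤ j → 1 ≤ i → j + i = n → Δ j * relAug G T ^ i ≤ P) : Kfil G Δ T n ≤ P :=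
  iSup₂_le fun i hi => by
    rw [Finset.mem_Ico] at hi
    exact h _ _ (by omega) hi.1 (by omega)

end Kfil

section Semidirect

open Pointwise

variable {N T : Subgroup G} [N.Normal] {Ns : ℕ → Subgroup G}

theorem augI_le_nIdeal_one_sup (hjoin : N ⊔ T = ⊤) (hNs1 : Ns 1 = N) :
    augI G ≤ nIdeal G Ns 1 ⊔ relAug G T ⊔ nIdeal G Ns 1 * relAug G T := by
  refine Submodule.span_le.2 ?_
  rintro _ ⟨g, rfl⟩
  obtain ⟨a, ha, t, ht, rfl⟩ : g ∈ (N : Set G) * (T : Set G) := by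
    rw [← Subgroup.normal_mul, hjoin]; trivial
  have e : of ℤ G (a * t) - 1 =
      (of ℤ G a - 1) + (of ℤ G t - 1) + (of ℤ G a - 1) * (of ℤ G t - 1) := by
    rw [map_mul]; noncomm_ring
  have ha' : of ℤ G a - 1 ∈ nIdeal G Ns 1 := sub_one_mem_nIdeal le_rfl (hNs1 ▸ ha)
  rw [SetLike.mem_coe, e]
  exact add_mem (add_mem (Submodule.mem_sup_left (Submodule.mem_sup_left ha'))
      (Submodule.mem_sup_left (Submodule.mem_sup_right (sub_one_mem_relAug ht))))
    (Submodule.mem_sup_right (Submodule.mul_mem_mul ha' (sub_one_mem_relAug ht)))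

theorem augI_mul_nIdeal_le (hjoin : N ⊔ T = ⊤) (hNs1 : Ns 1 = N)
    (hNsrec : ∀ i, 1 ≤ i → Ns (i + 1) = ⁅Ns i, (⊤ : Subgroup G)⁆) {j : ℕ} (hj : 1 ≤ j) :
    augI G * nIdeal G Ns j ≤ nIdeal G Ns j * relAug G T ⊔ nIdeal G Ns (j + 1) := by
  have hΛ : nIdeal G Ns j * nIdeal G Ns 1 ≤ nIdeal G Ns (j + 1) := nIdeal_mul_nIdeal_le j 1
  calc augI G * nIdeal G Ns j
      ≤ nIdeal G Ns j * augI G ⊔ nIdeal G Ns (j + 1) := by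
        rw [augI_eq_relAug_top]; exact relAug_mul_nIdeal_le hNsrec ⊤ hj
    _ ≤ nIdeal G Ns j * (nIdeal G Ns 1 ⊔ relAug G T ⊔ nIdeal G Ns 1 * relAug G T) ⊔
          nIdeal G Ns (j + 1) :=
        sup_le_sup_right (mul_le_mul_right (augI_le_nIdeal_one_sup hjoin hNs1) _) _
    _ ≤ nIdeal G Ns j * relAug G T ⊔ nIdeal G Ns (j + 1) := by
        rw [Submodule.mul_sup, Submodule.mul_sup, ← mul_assoc]
        refine sup_le (sup_le (sup_le (hΛ.trans le_sup_right) le_sup_left) ?_) le_sup_right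
        exact (mul_le_mul_left (hΛ.trans (nIdeal_antitone j.le_succ)) _).trans le_sup_left

theorem augI_mul_Kfil_le (hjoin : N ⊔ T = ⊤) (hNs1 : Ns 1 = N)
    (hNsrec : ∀ i, 1 ≤ i → Ns (i + 1) = ⁅Ns i, (⊤ : Subgroup G)⁆) (n : ℕ) :
    augI G * Kfil G (nIdeal G Ns) T n ≤ Kfil G (nIdeal G Ns) T (n + 1) := by
  simp only [Kfil, Submodule.mul_iSup]
  refine iSup₂_le fun i hi => ?_
  rw [Finset.mem_Ico] at hi
  calc augI G * (nIdeal G Ns (n - i) * relAug G T ^ i)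
      ≤ (nIdeal G Ns (n - i) * relAug G T ⊔ nIdeal G Ns (n - i + 1)) * relAug G T ^ i := by
        rw [← mul_assoc]
        exact mul_le_mul_left (augI_mul_nIdeal_le hjoin hNs1 hNsrec (by omega)) _
    _ = nIdeal G Ns (n - i) * relAug G T ^ (i + 1) ⊔
          nIdeal G Ns (n - i + 1) * relAug G T ^ i := by
        rw [Submodule.sup_mul, mul_assoc, ← pow_succ']
    _ ≤ Kfil G (nIdeal G Ns) T (n + 1) :=
        sup_le (le_Kfil (by omega) (by omega) (by omega))
          (le_Kfil (by omega) hi.1 (by omega))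

theorem augI_mul_relAug_pow_le (hjoin : N ⊔ T = ⊤) (hNs1 : Ns 1 = N) (m : ℕ) :
    augI G * relAug G T ^ (m + 1) ≤
      relAug G T ^ (m + 2) ⊔ Kfil G (nIdeal G Ns) T (m + 2) := by
  have hK : nIdeal G Ns 1 * relAug G T ^ (m + 1) ≤ Kfil G (nIdeal G Ns) T (m + 2) :=
    le_Kfil le_rfl (by omega) (by omega)
  calc augI G * relAug G T ^ (m + 1)
      ≤ (nIdeal G Ns 1 ⊔ relAug G T ⊔ nIdeal G Ns 1 * relAug G T) * relAug G T ^ (m + 1) :=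
        mul_le_mul_left (augI_le_nIdeal_one_sup hjoin hNs1) _
    _ = nIdeal G Ns 1 * relAug G T ^ (m + 1) ⊔ relAug G T ^ (m + 2) ⊔
          nIdeal G Ns 1 * relAug G T ^ (m + 2) := by
        rw [Submodule.sup_mul, Submodule.sup_mul, mul_assoc, ← pow_succ']
    _ ≤ relAug G T ^ (m + 2) ⊔ Kfil G (nIdeal G Ns) T (m + 2) := by
        refine sup_le (sup_le (hK.trans le_sup_right) le_sup_left) (le_sup_of_le_right ?_)
        exact (mul_le_mul_right (pow_succ_le_pow_of_mul_le_self (relAug_mul_relAug_le T)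
          (by omega)) _).trans hK

theorem augI_pow_mul_relAug_le (hjoin : N ⊔ T = ⊤) (hNs1 : Ns 1 = N)
    (hNsrec : ∀ i, 1 ≤ i → Ns (i + 1) = ⁅Ns i, (⊤ : Subgroup G)⁆) :
    ∀ n, augI G ^ n * relAug G T ≤ relAug G T ^ (n + 1) ⊔ Kfil G (nIdeal G Ns) T (n + 1)
  | 0 => by rw [pow_zero, one_mul, pow_one]; exact le_sup_left
  | n + 1 =>
    calc augI G ^ (n + 1) * relAug G T
        = augI G * (augI G ^ n * relAug G T) := by rw [pow_succ', mul_assoc]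
      _ ≤ augI G * (relAug G T ^ (n + 1) ⊔ Kfil G (nIdeal G Ns) T (n + 1)) :=
          mul_le_mul_right (augI_pow_mul_relAug_le hjoin hNs1 hNsrec n) _
      _ = augI G * relAug G T ^ (n + 1) ⊔ augI G * Kfil G (nIdeal G Ns) T (n + 1) :=
          Submodule.mul_sup _ _ _
      _ ≤ relAug G T ^ (n + 2) ⊔ Kfil G (nIdeal G Ns) T (n + 2) :=
          sup_le (augI_mul_relAug_pow_le hjoin hNs1 n)
            ((augI_mul_Kfil_le hjoin hNs1 hNsrec (n + 1)).trans le_sup_right)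

end Semidirect

section Reverse

variable {T : Subgroup G} {Ns : ℕ → Subgroup G}

theorem relAug_pow_sup_Kfil_le (hNsrec : ∀ i, 1 ≤ i → Ns (i + 1) = ⁅Ns i, (⊤ : Subgroup G)⁆)
    (n : ℕ) : relAug G T ^ (n + 1) ⊔ Kfil G (nIdeal G Ns) T (n + 1) ≤ augI G ^ n * relAug G T := by
  have hT : relAug G T ≤ augI G := augI_eq_relAug_top (G := G) ▸ relAug_mono le_top
  refine sup_le ?_ (Kfil_le fun j i hj hi hn => ?_)
  · rw [pow_succ]
    exact mul_le_mul_left (pow_le_pow_left' hT n) _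
  · obtain ⟨i, rfl⟩ := Nat.exists_eq_add_of_le' hi
    calc nIdeal G Ns j * relAug G T ^ (i + 1)
        = nIdeal G Ns j * relAug G T ^ i * relAug G T := by rw [pow_succ, mul_assoc]
      _ ≤ augI G ^ j * augI G ^ i * relAug G T :=
        mul_le_mul_left (mul_le_mul' (nIdeal_le_augI_pow hNsrec hj) (pow_le_pow_left' hT i)) _
      _ = augI G ^ n * relAug G T := by rw [← pow_add]; congr 2; omega

end Reverse

section Directness

theorem mapDomainAlgHom_of {H : Type*} [Group H] (f : G →* H) (g : G) :
    mapDomainAlgHom ℤ ℤ f (of ℤ G g) = of ℤ H (f g) := by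
  simp [of_apply]

variable {N T : Subgroup G} [N.Normal] {Ns : ℕ → Subgroup G}

theorem series_le_of_normal (hNs1 : Ns 1 = N)
    (hNsrec : ∀ i, 1 ≤ i → Ns (i + 1) = ⁅Ns i, (⊤ : Subgroup G)⁆) {k : ℕ} (hk : 1 ≤ k) :
    Ns k ≤ N := by
  induction k, hk using Nat.le_induction with
  | base => exact hNs1.le
  | succ k hk ih =>
    rw [hNsrec k hk]
    exact (Subgroup.commutator_mono ih le_rfl).trans (Subgroup.commutator_le_left N ⊤)

theorem relAug_pow_le_range (m : ℕ) :
    relAug G T ^ (m + 1) ≤ (mapDomainAlgHom ℤ ℤ T.subtype).range.toSubmodule := by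
  have hT : relAug G T ≤ (mapDomainAlgHom ℤ ℤ T.subtype).range.toSubmodule := by
    refine Submodule.span_le.2 ?_
    rintro _ ⟨t, ht, rfl⟩
    refine (AlgHom.mem_range _).2 ⟨of ℤ T ⟨t, ht⟩ - 1, ?_⟩
    rw [map_sub, map_one, mapDomainAlgHom_of]
    rfl
  exact (pow_le_pow_left' hT _).trans
    ((Subalgebra.isIdempotentElem_toSubmodule _).pow_succ_eq m).le

theorem Kfil_le_ker (hNs1 : Ns 1 = N)
    (hNsrec : ∀ i, 1 ≤ i → Ns (i + 1) = ⁅Ns i, (⊤ : Subgroup G)⁆) (n : ℕ) :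
    Kfil G (nIdeal G Ns) T n ≤
      LinearMap.ker (mapDomainAlgHom ℤ ℤ (QuotientGroup.mk' N)).toLinearMap := by
  set K := LinearMap.ker (mapDomainAlgHom ℤ ℤ (QuotientGroup.mk' N)).toLinearMap
  have hK : ∀ x ∈ K, ∀ y, x * y ∈ K := fun x hx y => by
    simp only [K, LinearMap.mem_ker, AlgHom.toLinearMap_apply, map_mul] at hx ⊢
    rw [hx, zero_mul]
  refine Kfil_le fun j i hj _ _ => Submodule.mul_le.2 fun x hx y _ => hK x ?_ y
  refine nIdeal_le_of_filtration (S := fun _ => K) (fun k hk b hb => ?_)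
    (fun _ _ => Submodule.mul_le.2 fun x hx y _ => hK x hx y) (fun _ _ => le_rfl) hj hx
  have hbN : QuotientGroup.mk' N b = 1 :=
    (QuotientGroup.eq_one_iff b).2 (series_le_of_normal hNs1 hNsrec hk hb)
  rw [LinearMap.mem_ker, AlgHom.toLinearMap_apply, map_sub, map_one, mapDomainAlgHom_of, hbN,
    map_one, sub_self]

theorem disjoint_range_ker_of_inf_eq_bot (hdisj : N ⊓ T = ⊥) :
    Disjoint (mapDomainAlgHom ℤ ℤ T.subtype).range.toSubmodule
      (LinearMap.ker (mapDomainAlgHom ℤ ℤ (QuotientGroup.mk' N)).toLinearMap) := by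
  have hinj : Function.Injective ((QuotientGroup.mk' N).comp T.subtype) := by
    rw [injective_iff_map_eq_one]
    rintro ⟨t, ht⟩ h
    have htN : t ∈ N ⊓ T := ⟨(QuotientGroup.eq_one_iff t).1 h, ht⟩
    rw [hdisj, Subgroup.mem_bot] at htN
    exact Subtype.ext htN
  rw [Submodule.disjoint_def]
  rintro _ ⟨y, rfl⟩ hy
  have hy' : mapDomainAlgHom ℤ ℤ ((QuotientGroup.mk' N).comp T.subtype) y = 0 := by
    rw [mapDomainAlgHom_comp]; exact hy
  rw [(mapDomain_injective hinj) (hy'.trans (mapDomain_zero _).symm), map_zero]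

end Directness

end

theorem stmt11_general (G : Type*) [Group G] (N T : Subgroup G) [N.Normal]
    (hdisj : N ⊓ T = ⊥) (hjoin : N ⊔ T = ⊤)
    (Ns : ℕ → Subgroup G) (hNs1 : Ns 1 = N)
    (hNsrec : ∀ i, 1 ≤ i → Ns (i + 1) = ⁅Ns i, (⊤ : Subgroup G)⁆)
    (n : ℕ) :
    (augI G) ^ n * relAug G T =
      (relAug G T) ^ (n + 1) ⊔ Kfil G (nIdeal G Ns) T (n + 1) ∧
    (relAug G T) ^ (n + 1) ⊓ Kfil G (nIdeal G Ns) T (n + 1) = ⊥ :=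
  ⟨(augI_pow_mul_relAug_le hjoin hNs1 hNsrec n).antisymm (relAug_pow_sup_Kfil_le hNsrec n),
    ((disjoint_range_ker_of_inf_eq_bot hdisj).mono (relAug_pow_le_range n)
      (Kfil_le_ker hNs1 hNsrec (n + 1))).eq_bot⟩

/-- for `G = N ⋊ T` and all `n ≥ 1`,
`I(G)^n·I(T) = I(T)^{n+1} ⊕ 𝒦_{n+1}` as abelian groups, where
`𝒦_{n+1} = Σ_{i=1}^{n} Λ_{n+1-i}·I(T)^i` with `Λ_j = I_𝒩^j(N)`. -/
theorem stmt11 (G : Type*) [Group G] (N T : Subgroup G) [N.Normal]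
    (hdisj : N ⊓ T = ⊥) (hjoin : N ⊔ T = ⊤)
    (Ns : ℕ → Subgroup G) (hNs1 : Ns 1 = N)
    (hNsrec : ∀ i, 1 ≤ i → Ns (i + 1) = ⁅Ns i, (⊤ : Subgroup G)⁆)
    (n : ℕ) (hn : 1 ≤ n) :
    (augI G) ^ n * relAug G T =
      (relAug G T) ^ (n + 1) ⊔ Kfil G (nIdeal G Ns) T (n + 1) ∧
    (relAug G T) ^ (n + 1) ⊓ Kfil G (nIdeal G Ns) T (n + 1) = ⊥ :=
  stmt11_general G N T hdisj hjoin Ns hNs1 hNsrec n
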